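/- Let a be a real number. Define ψ : (0, π/(2ω)) × ℝ^d → ℂ by ψ(t,x) = (cos ωt)^{−d/2} · exp{ (i·m·ω/(2ħ·sin ωt)) · [ −(1/cos ωt)·‖x − p·(a·sin ωt)/(mω) − I(0,t)‖² + ‖x‖²·cos ωt + 2 x·I(t,0) − 2 J(t,0) ] }. Then ψ satisfies the driven harmonic oscillator Schrödinger equation iħ·∂ψ/∂t + (ħ²/(2m))·Δ_x ψ − (1/2)·m·ω²·‖x‖²·ψ + (f(t)·x)·ψ = 0 at every point of (0, π/(2ω)) × ℝ^d, and for every x ∈ ℝ^d one has lim_{t→0⁺} ψ(t,x) = exp(i·a·(p·x)/ħ). -/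

import Mathlib

open scoped RealInnerProductSpace

/-- Directional derivative of a complex-valued function on `ℝ^d` along `v`. -/
noncomputable def dirDeriv {d : ℕ} (v : EuclideanSpace ℝ (Fin d))
    (g : EuclideanSpace ℝ (Fin d) → ℂ) (x : EuclideanSpace ℝ (Fin d)) : ℂ :=
  deriv (fun r : ℝ => g (x + r • v)) 0

/-- The Laplacian `Δg = ∑_{j=1}^d ∂²g/∂x_j²` of a complex-valued function on `ℝ^d`. -/
noncomputable def laplacian {d : ℕ} (g : EuclideanSpace ℝ (Fin d) → ℂ) :
    EuclideanSpace ℝ (Fin d) → ℂ :=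
  fun x => ∑ j : Fin d,
    dirDeriv (EuclideanSpace.single j (1 : ℝ))
      (dirDeriv (EuclideanSpace.single j (1 : ℝ)) g) x

/-- `I(u,v) = (1/(mω))·∫_v^u f(s)·sin(ω(s−v)) ds ∈ ℝ^d`. -/
noncomputable def Ivec {d : ℕ} (m ω : ℝ) (f : ℝ → EuclideanSpace ℝ (Fin d)) (u v : ℝ) :
    EuclideanSpace ℝ (Fin d) :=
  (1 / (m * ω)) • ∫ s in v..u, Real.sin (ω * (s - v)) • f s

/-- `J(u,v) = (1/(m²ω²))·∫_v^u ∫_v^s (f(s)·f(s'))·sin(ω(u−s))·sin(ω(s'−v)) ds' ds ∈ ℝ`. -/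
noncomputable def Jval {d : ℕ} (m ω : ℝ) (f : ℝ → EuclideanSpace ℝ (Fin d)) (u v : ℝ) : ℝ :=
  (1 / (m ^ 2 * ω ^ 2)) * ∫ s in v..u, ∫ s' in v..s,
    (⟪f s, f s'⟫ : ℝ) * Real.sin (ω * (u - s)) * Real.sin (ω * (s' - v))

/-! `ψ` is a Gaussian wave `A(t) · exp(i(α(t)‖x‖² + ⟨x, β(t)⟩ + γ(t)))`. For such a wave the
Schrödinger equation splits, coefficient by coefficient in `x`, into a Riccati equation for `α`,
a linear equation for `β` driven by `f`, and quadratures for `A` and `γ`.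

Writing `S(t) = ∫₀ᵗ sin(ωs) f(s) ds` and `C(t) = ∫₀ᵗ cos(ωs) f(s) ds`, the vectors `I(t,0)`,
`I(0,t)` are combinations of `S` and `C`, and the double integral `J(t,0)` collapses to single
integrals because `∫₀ᵗ sin(ωs) ⟨f(s), S(s)⟩ ds = ‖S(t)‖²/2`. This identifies
`α = -(mω/2ħ) tan ωt` and `β = (a p + C(t)) / (ħ cos ωt)`; all four coefficients are
differentiable wherever `cos ωt ≠ 0`, in particular at `t = 0`, where the wave is the plane wave
`exp(i a ⟨p, x⟩ / ħ)`. -/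

open MeasureTheory Filter Topology

section Moments

variable {E : Type*} [NormedAddCommGroup E] [InnerProductSpace ℝ E] [CompleteSpace E]
  (ω : ℝ) (f : ℝ → E)

noncomputable def sinMoment (t : ℝ) : E := ∫ s in (0 : ℝ)..t, Real.sin (ω * s) • f s

noncomputable def cosMoment (t : ℝ) : E := ∫ s in (0 : ℝ)..t, Real.cos (ω * s) • f s

noncomputable def crossMoment (t : ℝ) : ℝ :=
  ∫ s in (0 : ℝ)..t, Real.cos (ω * s) * ⟪f s, sinMoment ω f s⟫

variable {ω f}

theorem hasDerivAt_sinMoment (hf : Continuous f) (t : ℝ) :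
    HasDerivAt (sinMoment ω f) (Real.sin (ω * t) • f t) t :=
  (Continuous.integral_hasStrictDerivAt (by fun_prop) 0 t).hasDerivAt

theorem hasDerivAt_cosMoment (hf : Continuous f) (t : ℝ) :
    HasDerivAt (cosMoment ω f) (Real.cos (ω * t) • f t) t :=
  (Continuous.integral_hasStrictDerivAt (by fun_prop) 0 t).hasDerivAt

theorem continuous_sinMoment (hf : Continuous f) : Continuous (sinMoment ω f) :=
  continuous_iff_continuousAt.2 fun t => (hasDerivAt_sinMoment hf t).continuousAt

theorem hasDerivAt_crossMoment (hf : Continuous f) (t : ℝ) :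
    HasDerivAt (crossMoment ω f) (Real.cos (ω * t) * ⟪f t, sinMoment ω f t⟫) t :=
  have := continuous_sinMoment (ω := ω) hf
  (Continuous.integral_hasStrictDerivAt (by fun_prop) 0 t).hasDerivAt

theorem integral_sin_mul_inner_sinMoment (hf : Continuous f) (t : ℝ) :
    ∫ s in (0 : ℝ)..t, Real.sin (ω * s) * ⟪f s, sinMoment ω f s⟫ = ‖sinMoment ω f t‖ ^ 2 / 2 := by
  have hS := continuous_sinMoment (ω := ω) hf
  have hderiv (u : ℝ) : HasDerivAt (fun u => ‖sinMoment ω f u‖ ^ 2 / 2)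
      (Real.sin (ω * u) * ⟪f u, sinMoment ω f u⟫) u := by
    refine ((hasDerivAt_sinMoment hf u).norm_sq.div_const 2).congr_deriv ?_
    rw [real_inner_smul_right, real_inner_comm]
    ring
  rw [intervalIntegral.integral_eq_sub_of_hasDerivAt (fun u _ => hderiv u)
    (Continuous.intervalIntegrable (by fun_prop) _ _)]
  simp [sinMoment]

end Moments

section DuhamelIntegrals

variable {d : ℕ} {ω : ℝ} {f : ℝ → EuclideanSpace ℝ (Fin d)}

theorem Ivec_zero_right (m t : ℝ) : Ivec m ω f t 0 = (1 / (m * ω)) • sinMoment ω f t := by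
  simp [Ivec, sinMoment]

theorem Ivec_zero_left (hf : Continuous f) (m t : ℝ) :
    Ivec m ω f 0 t = (1 / (m * ω)) •
      (Real.sin (ω * t) • cosMoment ω f t - Real.cos (ω * t) • sinMoment ω f t) := by
  have hsplit (s : ℝ) : Real.sin (ω * (s - t)) • f s
      = Real.cos (ω * t) • (Real.sin (ω * s) • f s)
        - Real.sin (ω * t) • (Real.cos (ω * s) • f s) := by
    rw [mul_sub, Real.sin_sub, sub_smul]
    module
  rw [Ivec, intervalIntegral.integral_symm, funext hsplit, intervalIntegral.integral_sub
    (Continuous.intervalIntegrable (by fun_prop) _ _)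
    (Continuous.intervalIntegrable (by fun_prop) _ _),
    intervalIntegral.integral_smul, intervalIntegral.integral_smul, neg_sub]
  rfl

theorem Jval_zero_right (hf : Continuous f) (m t : ℝ) :
    Jval m ω f t 0 = (1 / (m ^ 2 * ω ^ 2)) *
      (Real.sin (ω * t) * crossMoment ω f t - Real.cos (ω * t) * (‖sinMoment ω f t‖ ^ 2 / 2)) := by
  have hS := continuous_sinMoment (ω := ω) hf
  have hinner (s : ℝ) : ∫ s' in (0 : ℝ)..s,
      ⟪f s, f s'⟫ * Real.sin (ω * (t - s)) * Real.sin (ω * (s' - 0))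
      = Real.sin (ω * t) * (Real.cos (ω * s) * ⟪f s, sinMoment ω f s⟫)
        - Real.cos (ω * t) * (Real.sin (ω * s) * ⟪f s, sinMoment ω f s⟫) := by
    have hpull : ∫ s' in (0 : ℝ)..s, ⟪f s, f s'⟫ * Real.sin (ω * (t - s)) * Real.sin (ω * (s' - 0))
        = Real.sin (ω * (t - s)) * ⟪f s, sinMoment ω f s⟫ := by
      have hcomm := (innerSL ℝ (f s)).intervalIntegral_comp_comm
        (μ := volume) (Continuous.intervalIntegrable
          (by fun_prop : Continuous fun s' => Real.sin (ω * s') • f s') 0 s)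
      simp only [innerSL_apply_apply] at hcomm
      rw [sinMoment, ← hcomm, ← intervalIntegral.integral_const_mul]
      congr 1 with s'
      simp only [real_inner_smul_right, sub_zero]
      ring
    rw [hpull, mul_sub, Real.sin_sub]
    ring
  rw [Jval, funext hinner, intervalIntegral.integral_sub
    (Continuous.intervalIntegrable (by fun_prop) _ _)
    (Continuous.intervalIntegrable (by fun_prop) _ _),
    intervalIntegral.integral_const_mul, intervalIntegral.integral_const_mul,
    integral_sin_mul_inner_sinMoment hf]
  rfl

end DuhamelIntegrals

section GaussianWave

noncomputable def gaussianWave {E : Type*} [NormedAddCommGroup E] [InnerProductSpace ℝ E]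
    (A : ℂ) (α : ℝ) (β : E) (γ : ℝ) (y : E) : ℂ :=
  A * Complex.exp (Complex.I * ((α * ‖y‖ ^ 2 + ⟪y, β⟫ + γ : ℝ) : ℂ))

variable {d : ℕ} (A : ℂ) (α : ℝ) (β : EuclideanSpace ℝ (Fin d)) (γ : ℝ)

theorem hasDerivAt_gaussianWave_line (y v : EuclideanSpace ℝ (Fin d)) :
    HasDerivAt (fun r : ℝ => gaussianWave A α β γ (y + r • v))
      (Complex.I * ⟪(2 * α) • y + β, v⟫ * gaussianWave A α β γ y) 0 := by
  have hline : HasDerivAt (fun r : ℝ => y + r • v) v 0 := by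
    simpa using ((hasDerivAt_id (0 : ℝ)).smul_const v).const_add y
  have hphase : HasDerivAt (fun r : ℝ => α * ‖y + r • v‖ ^ 2 + ⟪y + r • v, β⟫ + γ)
      (α * (2 * ⟪y, v⟫) + ⟪v, β⟫) 0 := by
    simpa using ((hline.norm_sq.const_mul α).fun_add
      (hline.inner ℝ (hasDerivAt_const 0 β))).add_const γ
  refine (((hphase.ofReal_comp.const_mul Complex.I).cexp).const_mul A).congr_deriv ?_
  simp only [gaussianWave, zero_smul, add_zero]
  rw [inner_add_left, real_inner_smul_left, real_inner_comm β v]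
  push_cast
  ring

theorem dirDeriv_gaussianWave (v y : EuclideanSpace ℝ (Fin d)) :
    dirDeriv v (gaussianWave A α β γ) y
      = Complex.I * ⟪(2 * α) • y + β, v⟫ * gaussianWave A α β γ y :=
  (hasDerivAt_gaussianWave_line A α β γ y v).deriv

theorem dirDeriv_dirDeriv_gaussianWave (v y : EuclideanSpace ℝ (Fin d)) :
    dirDeriv v (dirDeriv v (gaussianWave A α β γ)) y
      = (2 * Complex.I * α * ‖v‖ ^ 2 - (⟪(2 * α) • y + β, v⟫ : ℝ) ^ 2)
        * gaussianWave A α β γ y := by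
  have hslope : HasDerivAt (fun r : ℝ => Complex.I * ((⟪(2 * α) • (y + r • v) + β, v⟫ : ℝ) : ℂ))
      (Complex.I * ((2 * α * ‖v‖ ^ 2 : ℝ) : ℂ)) 0 := by
    have h : HasDerivAt (fun r : ℝ => ⟪(2 * α) • (y + r • v) + β, v⟫) (2 * α * ‖v‖ ^ 2) 0 := by
      have hlin (r : ℝ) : ⟪(2 * α) • (y + r • v) + β, v⟫
          = ⟪(2 * α) • y + β, v⟫ + 2 * α * ‖v‖ ^ 2 * r := by
        simp only [smul_add, smul_smul, inner_add_left, real_inner_smul_left,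
          real_inner_self_eq_norm_sq]
        ring
      simp only [hlin]
      simpa using ((hasDerivAt_id (0 : ℝ)).const_mul (2 * α * ‖v‖ ^ 2)).const_add
        (⟪(2 * α) • y + β, v⟫ : ℝ)
    exact h.ofReal_comp.const_mul Complex.I
  rw [dirDeriv, funext fun r => dirDeriv_gaussianWave A α β γ v (y + r • v),
    (hslope.fun_mul (hasDerivAt_gaussianWave_line A α β γ y v)).deriv]
  simp only [zero_smul, add_zero]
  push_cast
  linear_combination (⟪(2 * α) • y + β, v⟫ ^ 2 * gaussianWave A α β γ y) * Complex.I_sq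

theorem laplacian_gaussianWave (x : EuclideanSpace ℝ (Fin d)) :
    laplacian (gaussianWave A α β γ) x
      = (2 * Complex.I * α * d - ((‖(2 * α) • x + β‖ ^ 2 : ℝ) : ℂ)) * gaussianWave A α β γ x := by
  have hnorm : ‖(2 * α) • x + β‖ ^ 2 = ∑ j, ((2 * α) • x + β) j ^ 2 := by
    simp [EuclideanSpace.norm_sq_eq]
  simp only [laplacian, dirDeriv_dirDeriv_gaussianWave, PiLp.norm_single, norm_one,
    EuclideanSpace.inner_single_right, ← Finset.sum_mul, hnorm]
  push_cast
  simp [Finset.sum_sub_distrib, mul_comm]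

end GaussianWave

theorem hasDerivAt_gaussianWave_time {E : Type*} [NormedAddCommGroup E] [InnerProductSpace ℝ E]
    {A : ℝ → ℂ} {α γ : ℝ → ℝ} {β : ℝ → E} {A' : ℂ} {α' γ' : ℝ} {β' : E} {t : ℝ}
    (hA : HasDerivAt A A' t) (hα : HasDerivAt α α' t) (hβ : HasDerivAt β β' t)
    (hγ : HasDerivAt γ γ' t) (x : E) :
    HasDerivAt (fun u => gaussianWave (A u) (α u) (β u) (γ u) x)
      ((A' + A t * Complex.I * ((α' * ‖x‖ ^ 2 + ⟪x, β'⟫ + γ' : ℝ) : ℂ))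
        * Complex.exp (Complex.I * ((α t * ‖x‖ ^ 2 + ⟪x, β t⟫ + γ t : ℝ) : ℂ))) t := by
  have hphase : HasDerivAt (fun u => α u * ‖x‖ ^ 2 + ⟪x, β u⟫ + γ u)
      (α' * ‖x‖ ^ 2 + ⟪x, β'⟫ + γ') t := by
    simpa using ((hα.mul_const (‖x‖ ^ 2)).fun_add ((hasDerivAt_const t x).inner ℝ hβ)).fun_add hγ
  refine (hA.fun_mul (hphase.ofReal_comp.const_mul Complex.I).cexp).congr_deriv ?_
  ring

theorem gaussianWave_solves_schrodinger {d : ℕ} {hbar m ω : ℝ} (hbar_ne : hbar ≠ 0)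
    (F : EuclideanSpace ℝ (Fin d)) {ψ : ℝ → EuclideanSpace ℝ (Fin d) → ℂ} {A : ℝ → ℂ}
    {α γ : ℝ → ℝ} {β : ℝ → EuclideanSpace ℝ (Fin d)} {t : ℝ}
    (hψ : ∀ᶠ u in 𝓝 t, ψ u = gaussianWave (A u) (α u) (β u) (γ u))
    (hA : HasDerivAt A (-(hbar * d / m * α t) * A t) t)
    (hα : HasDerivAt α (-(2 * hbar / m) * α t ^ 2 - m * ω ^ 2 / (2 * hbar)) t)
    (hβ : HasDerivAt β (hbar⁻¹ • F - (2 * hbar / m * α t) • β t) t)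
    (hγ : HasDerivAt γ (-(hbar / (2 * m)) * ‖β t‖ ^ 2) t) (x : EuclideanSpace ℝ (Fin d)) :
    Complex.I * (hbar : ℂ) * deriv (fun s : ℝ => ψ s x) t
        + ((hbar : ℂ) ^ 2 / (2 * (m : ℂ))) * laplacian (ψ t) x
        - (1 / 2) * (m : ℂ) * (ω : ℂ) ^ 2 * ((‖x‖ ^ 2 : ℝ) : ℂ) * ψ t x
        + ((⟪F, x⟫ : ℝ) : ℂ) * ψ t x = 0 := by
  have hev : (fun s => ψ s x) =ᶠ[𝓝 t] fun u => gaussianWave (A u) (α u) (β u) (γ u) x :=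
    hψ.mono fun u hu => congrFun hu x
  rw [hev.deriv_eq, (hasDerivAt_gaussianWave_time hA hα hβ hγ x).deriv, hψ.self_of_nhds,
    laplacian_gaussianWave, gaussianWave]
  set Φ' : ℝ := (-(2 * hbar / m) * α t ^ 2 - m * ω ^ 2 / (2 * hbar)) * ‖x‖ ^ 2
    + ⟪x, hbar⁻¹ • F - (2 * hbar / m * α t) • β t⟫ + -(hbar / (2 * m)) * ‖β t‖ ^ 2 with hΦ'
  set e := Complex.exp (Complex.I * ((α t * ‖x‖ ^ 2 + ⟪x, β t⟫ + γ t : ℝ) : ℂ))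
  -- the real part of the equation: the coefficients of `‖x‖²`, `x` and `1` cancel separately
  have hreal : hbar * Φ' + hbar ^ 2 / (2 * m) * ‖(2 * α t) • x + β t‖ ^ 2
      + m * ω ^ 2 / 2 * ‖x‖ ^ 2 - ⟪F, x⟫ = 0 := by
    rw [hΦ', norm_add_sq_real, inner_sub_right, real_inner_smul_right, real_inner_smul_right,
      real_inner_smul_left, norm_smul, real_inner_comm F, Real.norm_eq_abs, mul_pow, sq_abs]
    linear_combination (⟪F, x⟫ - m * ω ^ 2 / 2 * ‖x‖ ^ 2) * mul_inv_cancel₀ hbar_ne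
  have hrealC := congrArg (fun r : ℝ => (r : ℂ)) hreal
  push_cast at hrealC ⊢
  linear_combination (-(A t * e)) * hrealC + (hbar * Φ' * A t * e) * Complex.I_sq

theorem hasDerivAt_tan_const_mul {ω t : ℝ} (hc : Real.cos (ω * t) ≠ 0) :
    HasDerivAt (fun u => Real.tan (ω * u)) (ω / Real.cos (ω * t) ^ 2) t := by
  refine ((Real.hasDerivAt_tan hc).comp t ((hasDerivAt_id' t).const_mul ω)).congr_deriv ?_
  ring

section OscillatorCoefficients

variable {E : Type*} [NormedAddCommGroup E] [InnerProductSpace ℝ E] [CompleteSpace E]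
  (hbar m ω : ℝ) (f : ℝ → E) (v : E)

noncomputable def quadCoeff (t : ℝ) : ℝ := -(m * ω / (2 * hbar)) * Real.tan (ω * t)

noncomputable def linCoeff (t : ℝ) : E := (hbar * Real.cos (ω * t))⁻¹ • (v + cosMoment ω f t)

noncomputable def constCoeff (t : ℝ) : ℝ :=
  -(1 / (2 * hbar * m * ω)) * (Real.tan (ω * t) * ‖v + cosMoment ω f t‖ ^ 2
    - 2 * ⟪v + cosMoment ω f t, sinMoment ω f t⟫ + 2 * crossMoment ω f t)

noncomputable def amplitude (d : ℕ) (t : ℝ) : ℝ := Real.cos (ω * t) ^ (-(d : ℝ) / 2)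

variable {hbar m ω f v} {t : ℝ}

theorem hasDerivAt_quadCoeff (hbar_ne : hbar ≠ 0) (hm : m ≠ 0) (hc : Real.cos (ω * t) ≠ 0) :
    HasDerivAt (quadCoeff hbar m ω)
      (-(2 * hbar / m) * quadCoeff hbar m ω t ^ 2 - m * ω ^ 2 / (2 * hbar)) t := by
  refine ((hasDerivAt_tan_const_mul hc).const_mul _).congr_deriv ?_
  rw [quadCoeff, Real.tan_eq_sin_div_cos]
  field_simp
  linear_combination ω ^ 2 * Real.sin_sq_add_cos_sq (ω * t)

theorem hasDerivAt_linCoeff (hf : Continuous f) (hbar_ne : hbar ≠ 0) (hm : m ≠ 0)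
    (hc : Real.cos (ω * t) ≠ 0) :
    HasDerivAt (linCoeff hbar ω f v)
      (hbar⁻¹ • f t - (2 * hbar / m * quadCoeff hbar m ω t) • linCoeff hbar ω f v t) t := by
  have hscalar : HasDerivAt (fun u => (hbar * Real.cos (ω * u))⁻¹)
      (ω * Real.sin (ω * t) / (hbar * Real.cos (ω * t) ^ 2)) t := by
    refine ((((hasDerivAt_id' t).const_mul ω).cos.const_mul hbar).inv
      (mul_ne_zero hbar_ne hc)).congr_deriv ?_
    field_simp
  refine (hscalar.smul ((hasDerivAt_cosMoment hf t).const_add v)).congr_deriv ?_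
  rw [linCoeff, quadCoeff, Real.tan_eq_sin_div_cos, smul_smul, smul_smul]
  match_scalars <;> field_simp

theorem hasDerivAt_constCoeff (hf : Continuous f) (hbar_ne : hbar ≠ 0) (hω : ω ≠ 0)
    (hc : Real.cos (ω * t) ≠ 0) :
    HasDerivAt (constCoeff hbar m ω f v)
      (-(hbar / (2 * m)) * ‖linCoeff hbar ω f v t‖ ^ 2) t := by
  have hG := (hasDerivAt_cosMoment (ω := ω) hf t).const_add v
  have hS := hasDerivAt_sinMoment (ω := ω) hf t
  refine (((((hasDerivAt_tan_const_mul hc).fun_mul hG.norm_sq).fun_sub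
    ((hG.inner ℝ hS).const_mul 2)).fun_add ((hasDerivAt_crossMoment hf t).const_mul 2)).const_mul
      _).congr_deriv ?_
  simp only [linCoeff, norm_smul, real_inner_smul_right,
    real_inner_comm (sinMoment ω f t), Real.tan_eq_sin_div_cos, norm_inv, norm_mul,
    Real.norm_eq_abs, mul_pow, inv_pow, sq_abs]
  field_simp
  ring

theorem hasDerivAt_amplitude (d : ℕ) (hbar_ne : hbar ≠ 0) (hm : m ≠ 0)
    (hc : Real.cos (ω * t) ≠ 0) :
    HasDerivAt (fun u => (amplitude ω d u : ℂ))
      (-(hbar * d / m * quadCoeff hbar m ω t) * amplitude ω d t) t := by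
  have h : HasDerivAt (amplitude ω d)
      (-(hbar * d / m * quadCoeff hbar m ω t) * amplitude ω d t) t := by
    refine (((hasDerivAt_id' t).const_mul ω).cos.rpow_const (Or.inl hc)).congr_deriv ?_
    rw [amplitude, quadCoeff, Real.rpow_sub_one hc, Real.tan_eq_sin_div_cos]
    field_simp
  exact_mod_cast h.ofReal_comp

end OscillatorCoefficients

noncomputable def oscillatorWave {d : ℕ} (hbar m ω : ℝ) (f : ℝ → EuclideanSpace ℝ (Fin d))
    (v : EuclideanSpace ℝ (Fin d)) (t : ℝ) : EuclideanSpace ℝ (Fin d) → ℂ :=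
  gaussianWave (amplitude ω d t) (quadCoeff hbar m ω t) (linCoeff hbar ω f v t)
    (constCoeff hbar m ω f v t)

theorem phase_eq_coeffs {d : ℕ} {hbar m ω : ℝ} {f : ℝ → EuclideanSpace ℝ (Fin d)} {t : ℝ}
    (hf : Continuous f) (hbar_ne : hbar ≠ 0) (hm : m ≠ 0) (hω : ω ≠ 0)
    (hs : Real.sin (ω * t) ≠ 0) (hc : Real.cos (ω * t) ≠ 0) (a : ℝ)
    (p x : EuclideanSpace ℝ (Fin d)) :
    (m * ω / (2 * hbar * Real.sin (ω * t))) *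
        (-(1 / Real.cos (ω * t)) * ‖x - ((a * Real.sin (ω * t)) / (m * ω)) • p - Ivec m ω f 0 t‖ ^ 2
          + ‖x‖ ^ 2 * Real.cos (ω * t) + 2 * ⟪x, Ivec m ω f t 0⟫ - 2 * Jval m ω f t 0)
      = quadCoeff hbar m ω t * ‖x‖ ^ 2 + ⟪x, linCoeff hbar ω f (a • p) t⟫
        + constCoeff hbar m ω f (a • p) t := by
  have hshift : x - ((a * Real.sin (ω * t)) / (m * ω)) • p - Ivec m ω f 0 t
      = x - (1 / (m * ω)) • (Real.sin (ω * t) • (a • p + cosMoment ω f t)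
        - Real.cos (ω * t) • sinMoment ω f t) := by
    rw [Ivec_zero_left hf]
    match_scalars <;> field_simp
  rw [hshift, Ivec_zero_right, Jval_zero_right hf, quadCoeff, linCoeff, constCoeff]
  simp only [norm_sub_sq_real, norm_smul, inner_sub_right,
    real_inner_smul_right, Real.norm_eq_abs, mul_pow, sq_abs, Real.tan_eq_sin_div_cos,
    real_inner_comm (sinMoment ω f t)]
  field_simp
  linear_combination m ^ 2 * ω ^ 2 * ‖x‖ ^ 2 * Real.sin_sq_add_cos_sq (ω * t)

theorem tendsto_oscillatorWave_zero {d : ℕ} {hbar m ω : ℝ} {f : ℝ → EuclideanSpace ℝ (Fin d)}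
    (hf : Continuous f) (hbar_ne : hbar ≠ 0) (hm : m ≠ 0) (hω : ω ≠ 0)
    (v x : EuclideanSpace ℝ (Fin d)) :
    Tendsto (fun t => oscillatorWave hbar m ω f v t x) (𝓝 0)
      (𝓝 (Complex.exp (Complex.I * ((⟪x, v⟫ / hbar : ℝ) : ℂ)))) := by
  have hc : Real.cos (ω * 0) ≠ 0 := by simp
  have hcont : ContinuousAt (fun t => oscillatorWave hbar m ω f v t x) 0 :=
    (hasDerivAt_gaussianWave_time (hasDerivAt_amplitude d hbar_ne hm hc)
      (hasDerivAt_quadCoeff hbar_ne hm hc) (hasDerivAt_linCoeff (v := v) hf hbar_ne hm hc)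
      (hasDerivAt_constCoeff (m := m) (v := v) hf hbar_ne hω hc) x).continuousAt
  have hinit : oscillatorWave hbar m ω f v 0 x
      = Complex.exp (Complex.I * ((⟪x, v⟫ / hbar : ℝ) : ℂ)) := by
    simp [oscillatorWave, gaussianWave, amplitude, quadCoeff, linCoeff, constCoeff, cosMoment,
      sinMoment, crossMoment, real_inner_smul_right, div_eq_inv_mul]
  exact hinit ▸ hcont.tendsto

theorem sin_pos_and_cos_pos_of_mem_Ioo {ω u : ℝ} (hω : 0 < ω)
    (hu : u ∈ Set.Ioo 0 (Real.pi / (2 * ω))) : 0 < Real.sin (ω * u) ∧ 0 < Real.cos (ω * u) := by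
  have hlt : ω * u < Real.pi / 2 := by
    have := hu.2
    rw [lt_div_iff₀ (by positivity)] at this
    linarith
  have hpos : 0 < ω * u := mul_pos hω hu.1
  exact ⟨Real.sin_pos_of_pos_of_lt_pi hpos (by linarith [Real.pi_pos]),
    Real.cos_pos_of_mem_Ioo ⟨by linarith [Real.pi_pos], hlt⟩⟩

theorem driven_oscillator_plane_wave_solution
    (hbar m ω : ℝ) (hhbar : 0 < hbar) (hm : 0 < m) (hω : 0 < ω)
    (d : ℕ) (p : EuclideanSpace ℝ (Fin d))
    (f : ℝ → EuclideanSpace ℝ (Fin d)) (hf : Continuous f) (a : ℝ)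
    (ψ : ℝ → EuclideanSpace ℝ (Fin d) → ℂ)
    (hψ : ∀ (t : ℝ) (x : EuclideanSpace ℝ (Fin d)),
      ψ t x = ((Real.cos (ω * t) ^ (-(d : ℝ) / 2) : ℝ) : ℂ)
        * Complex.exp (Complex.I *
            (((m * ω / (2 * hbar * Real.sin (ω * t))) *
              (-(1 / Real.cos (ω * t))
                  * ‖x - ((a * Real.sin (ω * t)) / (m * ω)) • p - Ivec m ω f 0 t‖ ^ 2
                + ‖x‖ ^ 2 * Real.cos (ω * t)
                + 2 * (⟪x, Ivec m ω f t 0⟫ : ℝ)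
                - 2 * Jval m ω f t 0) : ℝ) : ℂ))) :
    (∀ t ∈ Set.Ioo (0 : ℝ) (Real.pi / (2 * ω)), ∀ x : EuclideanSpace ℝ (Fin d),
      Complex.I * (hbar : ℂ) * deriv (fun s : ℝ => ψ s x) t
        + ((hbar : ℂ) ^ 2 / (2 * (m : ℂ))) * laplacian (ψ t) x
        - (1 / 2) * (m : ℂ) * (ω : ℂ) ^ 2 * ((‖x‖ ^ 2 : ℝ) : ℂ) * ψ t x
        + ((⟪f t, x⟫ : ℝ) : ℂ) * ψ t x = 0)
    ∧ ∀ x : EuclideanSpace ℝ (Fin d),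
        Filter.Tendsto (fun t : ℝ => ψ t x) (nhdsWithin 0 (Set.Ioi 0))
          (nhds (Complex.exp (Complex.I * ((a * (⟪p, x⟫ : ℝ) / hbar : ℝ) : ℂ)))) := by
  have hwave : ∀ u ∈ Set.Ioo 0 (Real.pi / (2 * ω)), ψ u = oscillatorWave hbar m ω f (a • p) u := by
    intro u hu
    obtain ⟨hs, hc⟩ := sin_pos_and_cos_pos_of_mem_Ioo hω hu
    ext x
    rw [hψ, phase_eq_coeffs hf hhbar.ne' hm.ne' hω.ne' hs.ne' hc.ne']
    rfl
  refine ⟨fun t ht x => ?_, fun x => ?_⟩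
  · have hc := (sin_pos_and_cos_pos_of_mem_Ioo hω ht).2.ne'
    exact gaussianWave_solves_schrodinger hhbar.ne' (f t)
      (eventually_of_mem (Ioo_mem_nhds ht.1 ht.2) hwave)
      (hasDerivAt_amplitude d hhbar.ne' hm.ne' hc) (hasDerivAt_quadCoeff hhbar.ne' hm.ne' hc)
      (hasDerivAt_linCoeff hf hhbar.ne' hm.ne' hc) (hasDerivAt_constCoeff hf hhbar.ne' hω.ne' hc) x
  · have hlim := (tendsto_oscillatorWave_zero hf hhbar.ne' hm.ne' hω.ne' (a • p) x).mono_left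
      (nhdsWithin_le_nhds (s := Set.Ioi 0))
    rw [real_inner_smul_right, real_inner_comm] at hlim
    refine hlim.congr' ?_
    filter_upwards [Ioo_mem_nhdsGT (by positivity : (0 : ℝ) < Real.pi / (2 * ω))] with u hu
    exact (congrFun (hwave u hu) x).symm
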